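/- For ε ∈ ℝ, define g_ε : ℝ² → ℝ² by g_ε(x,y) = (2x + y + ε·sin(2πx), x + y + ε·sin(2πx)). Suppose p : ℝ → ℝ² is differentiable at 0, p(0) = (1/5, 2/5), and there exists δ > 0 such that g_ε(g_ε(p(ε))) = p(ε) + (2, 1) for all ε ∈ (−δ, δ). Then the derivative of p at 0 equals (−(1/5)·sin(2π/5), −(2/5)·sin(2π/5)). -/

import Mathlib

/-!
At `ε = 0` the perturbation `ε sin(2πx)` contributes only its `ε`-derivative `sin(2πx)`, so the
periodicity condition linearizes to `A² p' + A(s, s) - (s, s) = p'` with `s = sin(2π/5)`, since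
`g₀(p 0) = (4/5, 3/5)` and `sin(2π · 4/5) = -s`. The system `(A² - I) p' = -(2s, s)` has the
unique solution `p' = (-s/5, -2s/5)`.
-/

/-- The base torus map `g_ε(x,y) = (2x + y + ε sin(2πx), x + y + ε sin(2πx))` lifted to ℝ². -/
noncomputable def gmap (ε : ℝ) (q : ℝ × ℝ) : ℝ × ℝ :=
  (2 * q.1 + q.2 + ε * Real.sin (2 * Real.pi * q.1),
   q.1 + q.2 + ε * Real.sin (2 * Real.pi * q.1))

open Real Filter Topology

theorem hasDerivAt_gmap_zero {q : ℝ → ℝ × ℝ} {q' : ℝ × ℝ} (hq : HasDerivAt q q' 0) :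
    HasDerivAt (fun ε => gmap ε (q ε))
      ((2 * q'.1 + q'.2, q'.1 + q'.2) + (sin (2 * π * (q 0).1), sin (2 * π * (q 0).1))) 0 := by
  have hx : HasDerivAt (fun ε => (q ε).1) q'.1 0 := hq.fst
  have hy : HasDerivAt (fun ε => (q ε).2) q'.2 0 := hq.snd
  have hpert : HasDerivAt (fun ε => ε * sin (2 * π * (q ε).1)) (sin (2 * π * (q 0).1)) 0 := by
    simpa [Pi.mul_def] using (hasDerivAt_id' (0 : ℝ)).mul (hx.const_mul (2 * π)).sin
  exact (((hx.const_mul 2).add hy).add hpert).prodMk ((hx.add hy).add hpert)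

/-- the derivative at `ε = 0` of any differentiable family of 2-periodic
points of `g_ε` through `(1/5, 2/5)`. -/
theorem stmt_14 (p : ℝ → ℝ × ℝ) (hdiff : DifferentiableAt ℝ p 0)
    (hp0 : p 0 = (1 / 5, 2 / 5))
    (hper : ∃ δ > (0 : ℝ), ∀ ε ∈ Set.Ioo (-δ) δ, gmap ε (gmap ε (p ε)) = p ε + (2, 1)) :
    deriv p 0
      = (-(1 / 5) * Real.sin (2 * Real.pi / 5), -(2 / 5) * Real.sin (2 * Real.pi / 5)) := by
  obtain ⟨δ, hδ, hper⟩ := hper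
  have hp : HasDerivAt p (deriv p 0) 0 := hdiff.hasDerivAt
  have hperiodic : (fun ε => gmap ε (gmap ε (p ε))) =ᶠ[𝓝 0] fun ε => p ε + (2, 1) :=
    eventually_of_mem (Ioo_mem_nhds (neg_neg_of_pos hδ) hδ) hper
  have key := (hasDerivAt_gmap_zero (hasDerivAt_gmap_zero hp)).unique
    ((hp.add_const (2, 1)).congr_of_eventuallyEq hperiodic)
  have hsin_p0 : sin (2 * π * (p 0).1) = sin (2 * π / 5) := by
    rw [hp0, mul_one_div]
  have hsin_gp0 : sin (2 * π * (gmap 0 (p 0)).1) = -sin (2 * π / 5) := by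
    rw [hp0, gmap, ← sin_two_pi_sub]
    congr 1
    ring
  simp only [hsin_p0, hsin_gp0, Prod.ext_iff, Prod.fst_add, Prod.snd_add] at key
  obtain ⟨hx', hy'⟩ := key
  refine Prod.ext ?_ ?_ <;> dsimp only <;> linarith
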